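/- If utility functions are L-Lipschitz continuous and normalized (u_i(0) = 0), then: (i) δ = 1/max_i u_i(1^n) ≥ 1/(nL); (ii) α(ε) ≥ ε/(nL) for all ε ∈ (0,1); and (iii) for any exchange x, if the exchange graph G(x, ε/(nL)) is acyclic, then x is ε-core-stable. -/

import Mathlib

open Finset

/-- A valid exchange: a matrix with entries in `[0,1]`. -/
def IsExchange {n : ℕ} (x : Fin n → Fin n → ℝ) : Prop :=
  ∀ p q, x p q ∈ Set.Icc (0 : ℝ) 1

/-- The matrix `x + a·e_{ij}`. -/
def addEntry {n : ℕ} (x : Fin n → Fin n → ℝ) (i j : Fin n) (a : ℝ) :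
    Fin n → Fin n → ℝ :=
  fun p q => if p = i ∧ q = j then x p q + a else x p q

/-- `x` is `ε`-core-stable. -/
def CoreStable {n : ℕ} (u : Fin n → (Fin n → Fin n → ℝ) → ℝ) (ε : ℝ)
    (x : Fin n → Fin n → ℝ) : Prop :=
  ¬ ∃ (N' : Finset (Fin n)) (x' : Fin n → Fin n → ℝ),
      N'.Nonempty ∧ IsExchange x' ∧
      (∀ p q, (p ∉ N' ∨ q ∉ N') → x' p q = 0) ∧
      ∀ i ∈ N', u i x + ε < u i x'

/-- The exchange graph `G(x, α)` (edge `(i,j)` iff `x_{ij} < 1 − α`) is acyclic. -/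
def AcyclicExchangeGraph {n : ℕ} (x : Fin n → Fin n → ℝ) (α : ℝ) : Prop :=
  ∀ i : Fin n, ¬ Relation.TransGen (fun p q : Fin n => x p q < 1 - α) i i

/-- `α(ε) = min_{j,i} inf_{x : x_{ji}=1} max { a ∈ [0,1] : u_i(x − a·e_{ji}) ≥ u_i(x) − ε/n }`. -/
noncomputable def alphaEps {n : ℕ} (u : Fin n → (Fin n → Fin n → ℝ) → ℝ) (ε : ℝ) : ℝ :=
  sInf { a : ℝ | ∃ (j i : Fin n) (x : Fin n → Fin n → ℝ),
    IsExchange x ∧ x j i = 1 ∧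
    a = sSup { b : ℝ | b ∈ Set.Icc (0 : ℝ) 1 ∧
          u i x - ε / n ≤ u i (addEntry x j i (-b)) } }

/-- Telescoping: increasing the entries of column `i` one at a time, each by at
most `C ≤ 1`, raises `u i` by at most `n · L · C`. -/
lemma telescope_col {n : ℕ} (L : ℝ) (hL : 0 ≤ L)
    (u : Fin n → (Fin n → Fin n → ℝ) → ℝ)
    (hlip : ∀ (i j : Fin n) (x : Fin n → Fin n → ℝ) (a : ℝ),
      a ∈ Set.Icc (-1 : ℝ) 1 → |u j (addEntry x i j a) - u j x| ≤ L * |a|)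
    (i : Fin n) (x : Fin n → Fin n → ℝ) (d : Fin n → ℝ) (C : ℝ)
    (hd0 : ∀ p, 0 ≤ d p) (hdC : ∀ p, d p ≤ C) (hC : C ≤ 1) :
    u i (fun p q => if q = i then x p i + d p else x p q) ≤ u i x + n * (L * C) := by
  set f : ℕ → (Fin n → Fin n → ℝ) :=
    fun k p q => if q = i ∧ p.val < k then x p i + d p else x p q with hf
  have key : ∀ k, k ≤ n → u i (f k) ≤ u i x + k * (L * C) := by
    intro k
    induction k with
    | zero =>
      intro _
      have : f 0 = x := by funext p q; simp [hf]
      simp [this]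
    | succ k ih =>
      intro hk1
      have hk : k < n := Nat.lt_of_succ_le hk1
      set j : Fin n := ⟨k, hk⟩ with hj
      have hadd : f (k + 1) = addEntry (f k) j i (d j) := by
        funext p q
        simp only [addEntry, hf]
        by_cases hpq : p = j ∧ q = i
        · obtain ⟨hp, hq⟩ := hpq
          subst hp; subst hq
          simp [hj]
        · simp only [if_neg hpq]
          by_cases hq : q = i
          · subst hq
            have hp : p ≠ j := fun h => hpq ⟨h, rfl⟩
            have : p.val ≠ k := fun h => hp (Fin.ext h)
            have : (p.val < k + 1) ↔ (p.val < k) := by omega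
            simp [this]
          · simp [hq]
      have hmem : d j ∈ Set.Icc (-1 : ℝ) 1 :=
        ⟨le_trans (by norm_num) (hd0 j), le_trans (hdC j) hC⟩
      have hstep := hlip j i (f k) (d j) hmem
      have habs : u i (f (k + 1)) - u i (f k) ≤ L * C := by
        rw [hadd]
        calc u i (addEntry (f k) j i (d j)) - u i (f k)
            ≤ |u i (addEntry (f k) j i (d j)) - u i (f k)| := le_abs_self _
          _ ≤ L * |d j| := hstep
          _ ≤ L * C := by
              rw [abs_of_nonneg (hd0 j)]
              exact mul_le_mul_of_nonneg_left (hdC j) hL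
      have := ih (le_of_lt hk1)
      push_cast
      linarith
  have hfn : (fun p q => if q = i then x p i + d p else x p q) = f n := by
    funext p q
    simp [hf, p.isLt]
  rw [hfn]
  exact key n le_rfl

/-- **Consequences of `L`-Lipschitz utilities.** If the utilities are
`L`-Lipschitz and normalized, then (i) `δ = 1/max_i u_i(1) ≥ 1/(nL)`,
(ii) `α(ε) ≥ ε/(nL)`, and (iii) if `G(x, ε/(nL))` is acyclic then `x` is
`ε`-core-stable. -/
theorem lipschitz_consequences (n : ℕ) (hn : 0 < n)
    (L ε : ℝ) (hL : 1 < L) (hε : ε ∈ Set.Ioo (0 : ℝ) 1)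
    (u : Fin n → (Fin n → Fin n → ℝ) → ℝ)
    (hnormalized : ∀ i, u i (fun _ _ => 0) = 0)
    (hnonneg : ∀ i x, IsExchange x → 0 ≤ u i x)
    (hmono : ∀ i x y, (∀ p q, x p q ≤ y p q) → u i x ≤ u i y)
    (hbundle : ∀ i x y, (∀ j, x j i = y j i) → u i x = u i y)
    (hlip : ∀ (i j : Fin n) (x : Fin n → Fin n → ℝ) (a : ℝ),
      a ∈ Set.Icc (-1 : ℝ) 1 → |u j (addEntry x i j a) - u j x| ≤ L * |a|)
    (hsuppos : 0 < Finset.univ.sup' (Finset.univ_nonempty_iff.mpr ⟨⟨0, hn⟩⟩)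
        (fun i => u i (fun _ _ => 1))) :
    (1 / ((n : ℝ) * L) ≤
        1 / Finset.univ.sup' (Finset.univ_nonempty_iff.mpr ⟨⟨0, hn⟩⟩)
              (fun i => u i (fun _ _ => 1))) ∧
    (ε / ((n : ℝ) * L) ≤ alphaEps u ε) ∧
    (∀ x : Fin n → Fin n → ℝ, IsExchange x →
      AcyclicExchangeGraph x (ε / ((n : ℝ) * L)) → CoreStable u ε x) := by
  have hL0 : (0:ℝ) ≤ L := le_of_lt (lt_trans one_pos hL)
  have hn1 : (1:ℝ) ≤ (n:ℝ) := by exact_mod_cast hn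
  have hnL1 : (1:ℝ) < (n:ℝ) * L := lt_of_lt_of_le hL (by nlinarith)
  have hnL0 : (0:ℝ) < (n:ℝ) * L := lt_trans one_pos hnL1
  have hnpos : (0:ℝ) < (n:ℝ) := by exact_mod_cast hn
  obtain ⟨hε0, hε1⟩ := hε
  set α : ℝ := ε / ((n:ℝ) * L) with hα
  have hα0 : 0 < α := div_pos hε0 hnL0
  have hα1 : α < 1 := by
    rw [hα, div_lt_one hnL0]; exact lt_trans hε1 hnL1
  -- key cancellation facts
  have hnLα : (n:ℝ) * (L * α) = ε := by
    rw [hα]; field_simp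
  have hLα : L * α = ε / n := by
    rw [hα]; field_simp
  -- Part (ii) ingredient: each u i (all-ones) ≤ n * L
  have hub : ∀ i : Fin n, u i (fun _ _ => 1) ≤ (n:ℝ) * L := by
    intro i
    have htel := telescope_col L hL0 u hlip i (fun _ _ => (0:ℝ)) (fun _ => (1:ℝ)) 1
      (fun _ => zero_le_one) (fun _ => le_rfl) le_rfl
    have hb : u i (fun _ _ => (1:ℝ)) =
        u i (fun p q => if q = i then (0:ℝ) + 1 else 0) := by
      apply hbundle
      intro j; simp
    rw [hb]
    calc u i (fun p q => if q = i then (0:ℝ) + 1 else 0)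
        ≤ u i (fun _ _ => (0:ℝ)) + n * (L * 1) := htel
      _ = (n:ℝ) * L := by rw [hnormalized i]; ring
  refine ⟨?_, ?_, ?_⟩
  · -- Part (i)
    apply one_div_le_one_div_of_le hsuppos
    apply Finset.sup'_le
    intro i _
    exact hub i
  · -- Part (ii)
    apply le_csInf
    · exact ⟨_, ⟨0, hn⟩, ⟨0, hn⟩, fun _ _ => 1,
        fun p q => ⟨zero_le_one, le_rfl⟩, rfl, rfl⟩
    · rintro a ⟨j, i, x, hx, hji, rfl⟩
      have hmemB : α ∈ { b : ℝ | b ∈ Set.Icc (0 : ℝ) 1 ∧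
          u i x - ε / n ≤ u i (addEntry x j i (-b)) } := by
        refine ⟨⟨le_of_lt hα0, le_of_lt hα1⟩, ?_⟩
        have h := hlip j i x (-α) ⟨by linarith, by linarith⟩
        rw [abs_neg, abs_of_nonneg (le_of_lt hα0)] at h
        have h2 := abs_le.mp h
        have h3 : u i x - u i (addEntry x j i (-α)) ≤ ε / n := by
          rw [← hLα]; linarith [h2.1]
        linarith
      exact le_csSup ⟨1, fun b hb => hb.1.2⟩ hmemB
  · -- Part (iii)
    intro x hx hacyc
    rintro ⟨N', x', hN', hx', hzero, himp⟩
    set r : Fin n → Fin n → Prop := fun p q => x p q < 1 - α with hr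
    haveI : IsTrans (Fin n) (Relation.TransGen r) :=
      ⟨fun _ _ _ => Relation.TransGen.trans⟩
    haveI : IsIrrefl (Fin n) (Relation.TransGen r) := ⟨hacyc⟩
    have wf : WellFounded (Relation.TransGen r) :=
      Finite.wellFounded_of_trans_of_irrefl _
    obtain ⟨i, hiN, hmin⟩ := wf.has_min (↑N' : Set (Fin n)) (by
      obtain ⟨a, ha⟩ := hN'
      exact ⟨a, by simpa using ha⟩)
    have hiN' : i ∈ N' := by simpa using hiN
    -- every j ∈ N' sends at least 1 - α to i in x
    have hrecv : ∀ j ∈ N', 1 - α ≤ x j i := by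
      intro j hj
      by_contra hlt
      push_neg at hlt
      exact hmin j (by simpa using hj) (Relation.TransGen.single hlt)
    -- telescoping bound for agent i
    set d : Fin n → ℝ := fun p => max (x p i) (x' p i) - x p i with hd
    have hd0 : ∀ p, 0 ≤ d p := fun p => by
      simp [hd, le_max_left]
    have hdC : ∀ p, d p ≤ α := by
      intro p
      by_cases hp : p ∈ N'
      · have h1 : x' p i ≤ 1 := (hx' p i).2
        have h2 : x p i ≤ 1 := (hx p i).2
        have h3 : 1 - α ≤ x p i := hrecv p hp
        have : max (x p i) (x' p i) ≤ 1 := max_le h2 h1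
        simp only [hd]
        linarith
      · have h0 : x' p i = 0 := hzero p i (Or.inl hp)
        have : max (x p i) (x' p i) = x p i := by
          rw [h0]; exact max_eq_left (hx p i).1
        simp only [hd, this]
        linarith
    have htel := telescope_col L hL0 u hlip i x d α hd0 hdC (le_of_lt hα1)
    rw [hnLα] at htel
    -- u i x' equals u i of the matrix replacing column i of x by column i of x'
    have hbig : u i x' ≤ u i x + ε := by
      have h1 : u i x' = u i (fun p q => if q = i then x' p i else x p q) := by
        apply hbundle
        intro j; simp
      have h2 : u i (fun p q => if q = i then x' p i else x p q)
          ≤ u i (fun p q => if q = i then x p i + d p else x p q) := by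
        apply hmono
        intro p q
        by_cases hq : q = i
        · rw [if_pos hq, if_pos hq]
          simp only [hd]
          have := le_max_right (x p i) (x' p i)
          linarith
        · rw [if_neg hq, if_neg hq]
      rw [h1]
      exact le_trans h2 htel
    exact absurd (himp i hiN') (not_lt.mpr (by linarith))
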